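/- arXiv:1112.4549 — 5 statements merged into one kernel-verified Lean document; each statement's English description precedes it below -/
import Mathlib

section
/- Let Λ be a finitely aligned k-graph, let (μ, ν) be a generalised cycle in Λ, and let {t_λ : λ ∈ Λ} be a Cuntz–Krieger Λ-family in a C*-algebra B. Then: (i) t_μ t_μ* ≤ t_ν t_ν*; (ii) if (μ, ν) has no entrance, then t_μ t_μ* = t_ν t_ν*; (iii) if τ ∈ s(ν)Λ is an entrance to (μ, ν), then t_ν t_ν* − t_μ t_μ* ≥ t_{ντ} t_{ντ}*. -/
open scoped ComplexOrder ENat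

/-- A higher-rank graph (`k`-graph): a countable small category `Λ` together with a degree
functor `d : Λ → ℕᵏ` satisfying the unique factorisation property.  Morphisms ("paths") form
the type `Path`; vertices are identified with the paths of degree `0`.  Composition is encoded
as a total function `comp` whose axioms only apply to composable pairs (`s μ = r ν`). -/
structure KGraph (k : ℕ) : Type 1 where
  Path : Type
  countable : Countable Path
  d : Path → Fin k → ℕ
  r : Path → Path
  s : Path → Path
  comp : Path → Path → Path
  d_r : ∀ lam, d (r lam) = 0
  d_s : ∀ lam, d (s lam) = 0
  r_vertex : ∀ v, d v = 0 → r v = v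
  s_vertex : ∀ v, d v = 0 → s v = v
  r_comp : ∀ mu nu, s mu = r nu → r (comp mu nu) = r mu
  s_comp : ∀ mu nu, s mu = r nu → s (comp mu nu) = s nu
  d_comp : ∀ mu nu, s mu = r nu → d (comp mu nu) = d mu + d nu
  comp_assoc : ∀ lam mu nu, s lam = r mu → s mu = r nu →
    comp (comp lam mu) nu = comp lam (comp mu nu)
  id_comp : ∀ lam, comp (r lam) lam = lam
  comp_id : ∀ lam, comp lam (s lam) = lam
  factor : ∀ (lam : Path) (m n : Fin k → ℕ), d lam = m + n →
    ∃! p : Path × Path, d p.1 = m ∧ d p.2 = n ∧ s p.1 = r p.2 ∧ comp p.1 p.2 = lam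

namespace KGraph

variable {k : ℕ} (Λ : KGraph k)

/-- `v` is a vertex, i.e. a path of degree `0`. -/
def IsVertex (v : Λ.Path) : Prop := Λ.d v = 0

/-- The set of minimal common extensions of `mu` and `nu`. -/
def MCE (mu nu : Λ.Path) : Set Λ.Path :=
  {lam | Λ.d lam = Λ.d mu ⊔ Λ.d nu ∧
    (∃ α, Λ.s mu = Λ.r α ∧ Λ.comp mu α = lam) ∧
    (∃ β, Λ.s nu = Λ.r β ∧ Λ.comp nu β = lam)}

/-- Pairs `(α, β)` with `μα = νβ ∈ MCE (μ, ν)`. -/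
def MCEPairs (mu nu : Λ.Path) : Set (Λ.Path × Λ.Path) :=
  {p | Λ.s mu = Λ.r p.1 ∧ Λ.s nu = Λ.r p.2 ∧
    Λ.comp mu p.1 = Λ.comp nu p.2 ∧ Λ.comp mu p.1 ∈ Λ.MCE mu nu}

/-- `Λ` is finitely aligned if all sets of minimal common extensions are finite. -/
def FinitelyAligned : Prop := ∀ mu nu : Λ.Path, (Λ.MCE mu nu).Finite

/-- `Λ` is row-finite if `vΛⁿ` is finite for every vertex `v` and `n ∈ ℕᵏ`. -/
def RowFinite : Prop :=
  ∀ (v : Λ.Path) (n : Fin k → ℕ), Λ.IsVertex v → {lam | Λ.r lam = v ∧ Λ.d lam = n}.Finite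

/-- `Λ` is locally convex. -/
def LocallyConvex : Prop :=
  ∀ i j : Fin k, i ≠ j → ∀ mu : Λ.Path, Λ.d mu = Pi.single i 1 →
    (∃ e, Λ.r e = Λ.r mu ∧ Λ.d e = Pi.single j 1) →
    ∃ e, Λ.r e = Λ.s mu ∧ Λ.d e = Pi.single j 1

/-- A subset `F ⊆ vΛ` is exhaustive if every `λ ∈ vΛ` has a common extension with some
member of `F`. -/
def Exhaustive (v : Λ.Path) (F : Set Λ.Path) : Prop :=
  ∀ lam, Λ.r lam = v → ∃ mu ∈ F, (Λ.MCE lam mu).Nonempty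

/-- A generalised cycle: a pair of distinct paths `μ ≠ ν` with the same range and source such
that every extension of `μ` has a common extension with `ν`. -/
def IsGenCycle (mu nu : Λ.Path) : Prop :=
  mu ≠ nu ∧ Λ.s mu = Λ.s nu ∧ Λ.r mu = Λ.r nu ∧
    ∀ τ, Λ.r τ = Λ.s mu → (Λ.MCE (Λ.comp mu τ) nu).Nonempty

/-- An entrance to the generalised cycle `(μ, ν)`. -/
def IsEntrance (mu nu τ : Λ.Path) : Prop :=
  Λ.r τ = Λ.s nu ∧ Λ.MCE (Λ.comp nu τ) mu = ∅

/-- A (conventional) cycle: a path of nonzero degree whose range and source coincide. -/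
def IsCycle (lam : Λ.Path) : Prop := Λ.d lam ≠ 0 ∧ Λ.r lam = Λ.s lam

/-- `Λ` contains no (conventional) cycles. -/
def NoCycles : Prop := ∀ lam : Λ.Path, Λ.r lam = Λ.s lam → Λ.d lam = 0

/-- A vertex `v` with `vΛ = {v}`. -/
def IsSource (v : Λ.Path) : Prop :=
  Λ.IsVertex v ∧ ∀ lam, Λ.r lam = v → lam = v

/-- `Ext (μ; E)`. -/
def Ext (mu : Λ.Path) (E : Set Λ.Path) : Set Λ.Path :=
  {τ | Λ.r τ = Λ.s mu ∧ ∃ nu ∈ E, Λ.comp mu τ ∈ Λ.MCE mu nu}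

/-- No cycle in `Λ` has an entrance. -/
def NoCycleHasEntrance : Prop :=
  ∀ lam, Λ.IsCycle lam → ∀ τ, Λ.r τ = Λ.r lam → (Λ.MCE τ lam).Nonempty

/-- `x` encodes a path of degree `m ∈ (ℕ ∪ {∞})ᵏ` in `Λ`, i.e. a degree-preserving functor
`Ω_{k,m} → Λ`, recorded as a total function on pairs `(p, q)`; only the values with
`p ≤ q ≤ m` are constrained. -/
def IsPathFun (m : Fin k → ℕ∞) (x : (Fin k → ℕ) → (Fin k → ℕ) → Λ.Path) : Prop :=
  (∀ p q : Fin k → ℕ, p ≤ q → (∀ i, (q i : ℕ∞) ≤ m i) → Λ.d (x p q) = q - p) ∧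
  (∀ p q : Fin k → ℕ, p ≤ q → (∀ i, (q i : ℕ∞) ≤ m i) →
    Λ.r (x p q) = x p p ∧ Λ.s (x p q) = x q q) ∧
  (∀ p q u : Fin k → ℕ, p ≤ q → q ≤ u → (∀ i, (u i : ℕ∞) ≤ m i) →
    Λ.comp (x p q) (x q u) = x p u)

/-- `x` is a boundary path of degree `m`. -/
def IsBoundaryFun (m : Fin k → ℕ∞) (x : (Fin k → ℕ) → (Fin k → ℕ) → Λ.Path) : Prop :=
  Λ.IsPathFun m x ∧
  ∀ p : Fin k → ℕ, (∀ i, (p i : ℕ∞) ≤ m i) →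
    ∀ E : Set Λ.Path, E.Finite → (∀ lam ∈ E, Λ.r lam = x p p) → Λ.Exhaustive (x p p) E →
      ∃ mu ∈ E, (∀ i, ((p i + Λ.d mu i : ℕ) : ℕ∞) ≤ m i) ∧ x p (p + Λ.d mu) = mu

/-- A path function `x` of degree `m` belongs to `Λ^{≤∞}`. -/
def IsLeInftyPath (m : Fin k → ℕ∞) (x : (Fin k → ℕ) → (Fin k → ℕ) → Λ.Path) : Prop :=
  Λ.IsPathFun m x ∧
  ∀ n : Fin k → ℕ, (∀ i, (n i : ℕ∞) ≤ m i) → ∀ i, (n i : ℕ∞) = m i →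
    ∀ e, ¬(Λ.r e = x n n ∧ Λ.d e = Pi.single i 1)

/-- The degree of `τ^∞` for a cycle (or initial cycle) `τ`: `∞` in the coordinates where
`d τ` is nonzero, `0` elsewhere. -/
def degInf (τ : Λ.Path) : Fin k → ℕ∞ := fun i => if Λ.d τ i = 0 then 0 else ⊤

/-- An initial cycle: `r μ = s μ` and `r(μ)Λ^{eᵢ} = ∅` whenever `d(μ)ᵢ = 0`. -/
def IsInitialCycle (mu : Λ.Path) : Prop :=
  Λ.r mu = Λ.s mu ∧
  ∀ i, Λ.d mu i = 0 → ∀ e, ¬(Λ.r e = Λ.r mu ∧ Λ.d e = Pi.single i 1)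

/-- `x` is (the path function of) `μ^∞` for the initial cycle `μ`. -/
def IsInfIterate (mu : Λ.Path) (x : (Fin k → ℕ) → (Fin k → ℕ) → Λ.Path) : Prop :=
  Λ.IsPathFun (Λ.degInf mu) x ∧ x 0 0 = Λ.r mu ∧
    ∀ n : ℕ, x (n • Λ.d mu) ((n + 1) • Λ.d mu) = mu

/-- Membership in `Λ^{≤ n}`. -/
def LePath (n : Fin k → ℕ) (lam : Λ.Path) : Prop :=
  Λ.d lam ≤ n ∧
    ∀ i, Λ.d lam i < n i → ∀ e, ¬(Λ.r e = Λ.s lam ∧ Λ.d e = Pi.single i 1)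

/-- Minimal common extensions computed inside a subset `S` of `Λ` (all data lying in `S`). -/
def MCEWithin (S : Set Λ.Path) (mu nu : Λ.Path) : Set Λ.Path :=
  {lam | lam ∈ S ∧ Λ.d lam = Λ.d mu ⊔ Λ.d nu ∧
    (∃ α ∈ S, Λ.s mu = Λ.r α ∧ Λ.comp mu α = lam) ∧
    (∃ β ∈ S, Λ.s nu = Λ.r β ∧ Λ.comp nu β = lam)}

/-- Generalised cycles of the sub-`k`-graph determined by a subset `S` of `Λ`. -/
def IsGenCycleWithin (S : Set Λ.Path) (mu nu : Λ.Path) : Prop :=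
  mu ≠ nu ∧ Λ.s mu = Λ.s nu ∧ Λ.r mu = Λ.r nu ∧
    ∀ τ ∈ S, Λ.r τ = Λ.s mu → (Λ.MCEWithin S (Λ.comp mu τ) nu).Nonempty

end KGraph

/-- A Cuntz–Krieger `Λ`-family in a `*`-ring `B`: (CK1) the vertex elements are mutually
orthogonal projections, (CK2) multiplicativity, (CK3) the Cuntz–Krieger relation for
`t_μ* t_ν`, and (CK4) the exhaustivity relation (stated for an arbitrary ordering of the
finite exhaustive set). -/
structure CKFamily {k : ℕ} (Λ : KGraph k) (B : Type*) [NonUnitalRing B] [StarRing B] where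
  t : Λ.Path → B
  selfadjoint : ∀ v, Λ.IsVertex v → star (t v) = t v
  idem : ∀ v, Λ.IsVertex v → t v * t v = t v
  orth : ∀ v w, Λ.IsVertex v → Λ.IsVertex w → v ≠ w → t v * t w = 0
  mul_eq : ∀ mu nu, Λ.s mu = Λ.r nu → t mu * t nu = t (Λ.comp mu nu)
  ck3 : ∀ mu nu, star (t mu) * t nu = ∑ᶠ p ∈ Λ.MCEPairs mu nu, t p.1 * star (t p.2)
  ck4 : ∀ v, Λ.IsVertex v → ∀ (a : Λ.Path) (l : List Λ.Path), (a :: l).Nodup →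
    (∀ lam ∈ a :: l, Λ.r lam = v) → Λ.Exhaustive v {lam | lam ∈ a :: l} →
    (l.map fun lam => t v - t lam * star (t lam)).foldl (· * ·)
      (t v - t a * star (t a)) = 0

/-- A C*-algebra is AF (approximately finite-dimensional) if it contains an increasing
sequence of finite-dimensional `*`-subalgebras whose union is dense. -/
def IsAF (A : Type*) [NonUnitalNormedRing A] [StarRing A] [NormedSpace ℂ A] : Prop :=
  ∃ S : ℕ → NonUnitalStarSubalgebra ℂ A, Monotone S ∧
    (∀ n, FiniteDimensional ℂ (S n)) ∧ Dense (⋃ n, (S n : Set A))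

/-- A closed `*`-subalgebra of `A`, presented as a subset `S`, is AF if it contains an
increasing sequence of finite-dimensional `*`-subalgebras of `A` whose union is dense in `S`. -/
def IsAFIn (A : Type*) [NonUnitalNormedRing A] [StarRing A] [NormedSpace ℂ A]
    (S : Set A) : Prop :=
  ∃ T : ℕ → NonUnitalStarSubalgebra ℂ A, Monotone T ∧ (∀ n, (T n : Set A) ⊆ S) ∧
    (∀ n, FiniteDimensional ℂ (T n)) ∧ ∀ x ∈ S, x ∈ closure (⋃ n, (T n : Set A))

/-! By (CK3), `t_μ t_μ* t_ν t_ν*` is the sum of the `t_{μα} t_{μα}*` over the pairs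
`μα = νβ ∈ MCE(μ, ν)`. When every extension of `μ` meets `ν`, these `α` form a finite exhaustive
subset of `s(μ)Λ` of a common degree, so (CK4) gives `t_{s(μ)} = ∑ t_α t_α*`; conjugating by `t_μ`,
the same sum is `t_μ t_μ*`. Hence `t_μ t_μ* t_ν t_ν* = t_μ t_μ*`, which for projections means
`t_μ t_μ* ≤ t_ν t_ν*`; without an entrance the roles of `μ` and `ν` can be swapped. For an entrance
`τ`, (CK3) gives `t_{ντ}* t_μ = 0`, so the range projection of `ντ` lies below `t_ν t_ν*` and is
orthogonal to `t_μ t_μ*`. -/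

theorem foldl_mul_sub_eq_sub_sum {R I : Type*} [NonUnitalRing R] {e : R} {q : I → R}
    {l : List I} {c : R} (hce : c * e = c) (hcq : ∀ x ∈ l, c * q x = q x)
    (hqe : ∀ x ∈ l, q x * e = q x) (hl : l.Pairwise fun x y => q x * q y = 0) :
    (l.map fun x => e - q x).foldl (· * ·) c = c - (l.map q).sum := by
  induction l generalizing c with
  | nil => simp
  | cons x xs ih =>
    obtain ⟨hx, hxs⟩ := List.pairwise_cons.1 hl
    rw [List.map_cons, List.foldl_cons, mul_sub, hce, hcq x List.mem_cons_self,
      List.map_cons, List.sum_cons, ← sub_sub]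
    refine ih ?_ (fun y hy => ?_) (fun y hy => hqe y (List.mem_cons_of_mem x hy)) hxs
    · rw [sub_mul, hce, hqe x List.mem_cons_self]
    · rw [sub_mul, hcq y (List.mem_cons_of_mem x hy), hx y hy, sub_zero]

namespace KGraph

variable {k : ℕ} (Λ : KGraph k)

theorem exists_comp_eq_of_le {lam : Λ.Path} {m : Fin k → ℕ} (hm : m ≤ Λ.d lam) :
    ∃ lam₁ lam₂, Λ.d lam₁ = m ∧ Λ.s lam₁ = Λ.r lam₂ ∧ Λ.comp lam₁ lam₂ = lam := by
  obtain ⟨⟨lam₁, lam₂⟩, ⟨hd, -, hs, hcomp⟩, -⟩ :=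
    Λ.factor lam m (Λ.d lam - m) (add_tsub_cancel_of_le hm).symm
  exact ⟨lam₁, lam₂, hd, hs, hcomp⟩

variable {Λ}

theorem factor_unique {μ₁ μ₂ ν₁ ν₂ : Λ.Path} (hμ : Λ.s μ₁ = Λ.r μ₂) (hν : Λ.s ν₁ = Λ.r ν₂)
    (hd : Λ.d μ₁ = Λ.d ν₁) (h : Λ.comp μ₁ μ₂ = Λ.comp ν₁ ν₂) : μ₁ = ν₁ ∧ μ₂ = ν₂ := by
  have hd₂ : Λ.d μ₂ = Λ.d ν₂ := by
    apply add_left_cancel (a := Λ.d μ₁)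
    rw [← Λ.d_comp _ _ hμ, h, Λ.d_comp _ _ hν, hd]
  obtain ⟨_, -, huniq⟩ := Λ.factor (Λ.comp μ₁ μ₂) (Λ.d μ₁) (Λ.d μ₂) (Λ.d_comp _ _ hμ)
  exact Prod.mk.inj ((huniq (μ₁, μ₂) ⟨rfl, rfl, hμ, rfl⟩).trans
    (huniq (ν₁, ν₂) ⟨hd.symm, hd₂.symm, hν, h.symm⟩).symm)

theorem comp_left_cancel {μ α β : Λ.Path} (hα : Λ.s μ = Λ.r α) (hβ : Λ.s μ = Λ.r β)
    (h : Λ.comp μ α = Λ.comp μ β) : α = β :=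
  (factor_unique hα hβ rfl h).2

theorem exists_comp_eq_of_comp_eq_comp {μ α μ' α' : Λ.Path} (hα : Λ.s μ = Λ.r α)
    (hα' : Λ.s μ' = Λ.r α') (h : Λ.comp μ α = Λ.comp μ' α') (hle : Λ.d μ ≤ Λ.d μ') :
    ∃ β, Λ.s μ = Λ.r β ∧ Λ.s β = Λ.r α' ∧ Λ.comp μ β = μ' ∧ Λ.comp β α' = α := by
  obtain ⟨x, β, hdx, hxβ, rfl⟩ := Λ.exists_comp_eq_of_le hle
  have hβα' : Λ.s β = Λ.r α' := by rwa [Λ.s_comp x β hxβ] at hα'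
  rw [Λ.comp_assoc x β α' hxβ hβα'] at h
  obtain ⟨rfl, rfl⟩ :=
    factor_unique hα (by rwa [Λ.r_comp β α' hβα']) hdx.symm h
  exact ⟨β, hxβ, hβα', rfl, rfl⟩

theorem MCE_comm (μ ν : Λ.Path) : Λ.MCE μ ν = Λ.MCE ν μ := by
  ext lam
  simp only [MCE, Set.mem_ofPred_eq, sup_comm (Λ.d μ)]
  tauto

theorem MCE_eq_empty_of_d_eq {μ ν : Λ.Path} (hd : Λ.d μ = Λ.d ν) (hne : μ ≠ ν) :
    Λ.MCE μ ν = ∅ :=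
  Set.eq_empty_of_forall_notMem fun _ ⟨_, ⟨_, hα, hμα⟩, ⟨_, hβ, hνβ⟩⟩ =>
    hne (factor_unique hα hβ hd (hμα.trans hνβ.symm)).1

theorem MCEPairs_eq_empty {μ ν : Λ.Path} (h : Λ.MCE μ ν = ∅) : Λ.MCEPairs μ ν = ∅ :=
  Set.eq_empty_of_forall_notMem fun p hp => by simpa [h] using hp.2.2.2

theorem MCEPairs_self (ν : Λ.Path) : Λ.MCEPairs ν ν = {(Λ.s ν, Λ.s ν)} := by
  have hν : Λ.s ν = Λ.r (Λ.s ν) := (Λ.r_vertex _ (Λ.d_s ν)).symm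
  ext ⟨α, β⟩
  simp only [MCEPairs, MCE, Set.mem_ofPred_eq, Set.mem_singleton_iff, Prod.mk.injEq, sup_idem]
  constructor
  · rintro ⟨hα, hβ, hαβ, hd, -⟩
    obtain rfl := comp_left_cancel hα hβ hαβ
    rw [Λ.d_comp ν α hα, add_eq_left] at hd
    have hα_eq : α = Λ.s ν := (hα.trans (Λ.r_vertex α hd)).symm
    exact ⟨hα_eq, hα_eq⟩
  · rintro ⟨rfl, rfl⟩
    rw [Λ.comp_id]
    exact ⟨hν, hν, rfl, rfl, ⟨_, hν, Λ.comp_id ν⟩, ⟨_, hν, Λ.comp_id ν⟩⟩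

theorem d_fst_of_mem_MCEPairs {μ ν : Λ.Path} {p : Λ.Path × Λ.Path}
    (hp : p ∈ Λ.MCEPairs μ ν) : Λ.d p.1 = Λ.d μ ⊔ Λ.d ν - Λ.d μ :=
  eq_tsub_of_add_eq (by rw [add_comm, ← Λ.d_comp _ _ hp.1]; exact hp.2.2.2.1)

theorem injOn_fst_MCEPairs (μ ν : Λ.Path) : Set.InjOn Prod.fst (Λ.MCEPairs μ ν) :=
  fun _ hp _ hq h => Prod.ext h
    (comp_left_cancel hp.2.1 hq.2.1 (hp.2.2.1.symm.trans (h ▸ hq.2.2.1)))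

theorem finite_MCEPairs (hFA : Λ.FinitelyAligned) (μ ν : Λ.Path) :
    (Λ.MCEPairs μ ν).Finite := by
  refine Set.Finite.of_finite_image (f := fun p => Λ.comp μ p.1) ?_ ?_
  · exact (hFA μ ν).subset (Set.image_subset_iff.2 fun p hp => hp.2.2.2)
  · exact fun _ hp _ hq h => injOn_fst_MCEPairs μ ν hp hq (comp_left_cancel hp.1 hq.1 h)

/-- A common extension of `μτ` and `ν` passes through some `μα ∈ MCE(μ, ν)`, and its part after
`μ` is then a common extension of `τ` and `α`. -/
theorem exists_fst_MCEPairs_MCE_nonempty {μ ν τ : Λ.Path} (hτ : Λ.r τ = Λ.s μ)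
    (h : (Λ.MCE (Λ.comp μ τ) ν).Nonempty) :
    ∃ α ∈ Prod.fst '' Λ.MCEPairs μ ν, (Λ.MCE τ α).Nonempty := by
  obtain ⟨_, hd, ⟨γ, hγ, rfl⟩, ⟨β, hβ, hνβ⟩⟩ := h
  have hμτ : Λ.s μ = Λ.r τ := hτ.symm
  have hτγ : Λ.s τ = Λ.r γ := by rwa [Λ.s_comp μ τ hμτ] at hγ
  have hμσ : Λ.s μ = Λ.r (Λ.comp τ γ) := by rw [Λ.r_comp τ γ hτγ, hτ]
  rw [Λ.comp_assoc μ τ γ hμτ hτγ] at hd hνβ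
  rw [Λ.d_comp μ τ hμτ] at hd
  have hle : Λ.d μ ⊔ Λ.d ν ≤ Λ.d (Λ.comp μ (Λ.comp τ γ)) :=
    hd ▸ sup_le_sup_right le_self_add _
  obtain ⟨l₁, l₂, hdl₁, hl, hl₁₂⟩ := Λ.exists_comp_eq_of_le hle
  obtain ⟨α, hα, hαl₂, hμα, hσ⟩ :=
    exists_comp_eq_of_comp_eq_comp hμσ hl hl₁₂.symm (hdl₁ ▸ le_sup_left)
  obtain ⟨β₁, hβ₁, -, hνβ₁, -⟩ :=
    exists_comp_eq_of_comp_eq_comp hβ hl (hνβ.trans hl₁₂.symm) (hdl₁ ▸ le_sup_right)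
  have hdα : Λ.d μ + Λ.d α = Λ.d μ ⊔ Λ.d ν := by rw [← Λ.d_comp μ α hα, hμα, hdl₁]
  have hdσ : Λ.d μ + Λ.d (Λ.comp τ γ) = (Λ.d μ + Λ.d τ) ⊔ Λ.d ν := by
    rw [← Λ.d_comp μ _ hμσ, hd]
  have hdσ' : Λ.d (Λ.comp τ γ) = Λ.d τ ⊔ Λ.d α := by
    funext i
    have h₁ := congrFun hdα i
    have h₂ := congrFun hdσ i
    simp only [Pi.add_apply, Pi.sup_apply] at h₁ h₂ ⊢
    omega
  refine ⟨α, ⟨(α, β₁), ⟨hα, hβ₁, hμα.trans hνβ₁.symm, ?_⟩, rfl⟩, Λ.comp τ γ, hdσ',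
    ⟨γ, hτγ, rfl⟩, ⟨l₂, hαl₂, hσ⟩⟩
  rw [hμα]
  exact ⟨hdl₁, ⟨α, hα, hμα⟩, ⟨β₁, hβ₁, hνβ₁⟩⟩

end KGraph

namespace CKFamily

variable {k : ℕ} {Λ : KGraph k} {B : Type*} [NonUnitalRing B] [StarRing B] (f : CKFamily Λ B)

def rangeProj (lam : Λ.Path) : B := f.t lam * star (f.t lam)

theorem star_t_mul_t_eq_zero {μ ν : Λ.Path} (h : Λ.MCE μ ν = ∅) : star (f.t μ) * f.t ν = 0 := by
  rw [f.ck3, KGraph.MCEPairs_eq_empty h, finsum_mem_empty]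

theorem star_t_mul_t (lam : Λ.Path) : star (f.t lam) * f.t lam = f.t (Λ.s lam) := by
  rw [f.ck3, KGraph.MCEPairs_self, finsum_mem_singleton, f.selfadjoint _ (Λ.d_s lam),
    f.idem _ (Λ.d_s lam)]

theorem t_mul_t_s (lam : Λ.Path) : f.t lam * f.t (Λ.s lam) = f.t lam := by
  rw [f.mul_eq _ _ (Λ.r_vertex _ (Λ.d_s lam)).symm, Λ.comp_id]

theorem t_vertex_mul_t {v lam : Λ.Path} (hv : Λ.IsVertex v) (h : Λ.r lam = v) :
    f.t v * f.t lam = f.t lam := by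
  rw [f.mul_eq _ _ (by rw [Λ.s_vertex v hv, h]), ← h, Λ.id_comp]

theorem t_vertex_mul_rangeProj {v lam : Λ.Path} (hv : Λ.IsVertex v) (h : Λ.r lam = v) :
    f.t v * f.rangeProj lam = f.rangeProj lam := by
  rw [rangeProj, ← mul_assoc, f.t_vertex_mul_t hv h]

theorem rangeProj_mul_t_vertex {v lam : Λ.Path} (hv : Λ.IsVertex v) (h : Λ.r lam = v) :
    f.rangeProj lam * f.t v = f.rangeProj lam := by
  rw [rangeProj, mul_assoc, ← f.selfadjoint v hv, ← star_mul, f.t_vertex_mul_t hv h]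

theorem isStarProjection_rangeProj (lam : Λ.Path) : IsStarProjection (f.rangeProj lam) where
  isIdempotentElem := by
    rw [IsIdempotentElem, rangeProj, mul_assoc, ← mul_assoc (star _), star_t_mul_t,
      ← mul_assoc, t_mul_t_s]
  isSelfAdjoint := by rw [IsSelfAdjoint, rangeProj, star_mul, star_star]

theorem rangeProj_mul_rangeProj_eq_zero {μ ν : Λ.Path} (h : Λ.MCE μ ν = ∅) :
    f.rangeProj μ * f.rangeProj ν = 0 := by
  rw [rangeProj, rangeProj, mul_assoc, ← mul_assoc (star _), f.star_t_mul_t_eq_zero h,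
    zero_mul, mul_zero]

theorem rangeProj_mul_rangeProj_comp {ν τ : Λ.Path} (h : Λ.s ν = Λ.r τ) :
    f.rangeProj ν * f.rangeProj (Λ.comp ν τ) = f.rangeProj (Λ.comp ν τ) := by
  rw [rangeProj, rangeProj, ← mul_assoc, ← f.mul_eq ν τ h, mul_assoc (f.t ν),
    ← mul_assoc (star (f.t ν)), star_t_mul_t, ← mul_assoc, t_mul_t_s]

theorem t_mul_rangeProj_mul_star {μ α : Λ.Path} (h : Λ.s μ = Λ.r α) :
    f.t μ * f.rangeProj α * star (f.t μ) = f.rangeProj (Λ.comp μ α) := by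
  rw [rangeProj, rangeProj, ← f.mul_eq μ α h, star_mul, ← mul_assoc, ← mul_assoc,
    mul_assoc _ _ (star (f.t α))]

/-- Paths of a common degree have mutually orthogonal range projections, so the product in
(CK4) telescopes to `t_v - ∑ t_λ t_λ*`. -/
theorem t_vertex_eq_sum_rangeProj {v : Λ.Path} (hv : Λ.IsVertex v) {E : Finset Λ.Path}
    {n : Fin k → ℕ} (hr : ∀ lam ∈ E, Λ.r lam = v) (hd : ∀ lam ∈ E, Λ.d lam = n)
    (hE : Λ.Exhaustive v E) : f.t v = ∑ lam ∈ E, f.rangeProj lam := by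
  cases hl : E.toList with
  | nil =>
    obtain ⟨μ, hμ, -⟩ := hE v (Λ.r_vertex v hv)
    simpa [hl] using Finset.mem_toList.2 hμ
  | cons a l =>
    have hmem : ∀ x, x ∈ a :: l ↔ x ∈ E := fun x => by rw [← hl, Finset.mem_toList]
    have hck4 := f.ck4 v hv a l (hl ▸ E.nodup_toList) (fun x hx => hr x ((hmem x).1 hx))
      (by rwa [show {lam | lam ∈ a :: l} = (E : Set Λ.Path) from Set.ext hmem])
    have horth : (a :: l).Pairwise fun x y => f.rangeProj x * f.rangeProj y = 0 :=
      (hl ▸ E.nodup_toList).imp_of_mem fun hx hy hxy => f.rangeProj_mul_rangeProj_eq_zero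
        (KGraph.MCE_eq_empty_of_d_eq ((hd _ ((hmem _).1 hx)).trans
          (hd _ ((hmem _).1 hy)).symm) hxy)
    have hfold := foldl_mul_sub_eq_sub_sum (f.idem v hv)
      (fun x hx => f.t_vertex_mul_rangeProj hv (hr x ((hmem x).1 hx)))
      (fun x hx => f.rangeProj_mul_t_vertex hv (hr x ((hmem x).1 hx))) horth
    rw [List.map_cons, List.foldl_cons, mul_sub, f.idem v hv,
      f.t_vertex_mul_rangeProj hv (hr a ((hmem a).1 List.mem_cons_self)), ← hl,
      Finset.sum_map_toList] at hfold
    exact sub_eq_zero.1 (hfold.symm.trans hck4)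

theorem rangeProj_mul_rangeProj_eq_left (hFA : Λ.FinitelyAligned) {μ ν : Λ.Path}
    (h : ∀ τ, Λ.r τ = Λ.s μ → (Λ.MCE (Λ.comp μ τ) ν).Nonempty) :
    f.rangeProj μ * f.rangeProj ν = f.rangeProj μ := by
  classical
  set P := (Λ.finite_MCEPairs hFA μ ν).toFinset
  have hP : ∀ p ∈ P, p ∈ Λ.MCEPairs μ ν := fun p hp => (Set.Finite.mem_toFinset _).1 hp
  have hvertex : f.t (Λ.s μ) = ∑ α ∈ P.image Prod.fst, f.rangeProj α := by
    refine f.t_vertex_eq_sum_rangeProj (Λ.d_s μ) (n := Λ.d μ ⊔ Λ.d ν - Λ.d μ) ?_ ?_ ?_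
    · simp only [Finset.mem_image]
      rintro _ ⟨p, hp, rfl⟩
      exact (hP p hp).1.symm
    · simp only [Finset.mem_image]
      rintro _ ⟨p, hp, rfl⟩
      exact KGraph.d_fst_of_mem_MCEPairs (hP p hp)
    · intro τ hτ
      obtain ⟨α, hα, hτα⟩ := KGraph.exists_fst_MCEPairs_MCE_nonempty hτ (h τ hτ)
      refine ⟨α, ?_, hτα⟩
      simpa [P] using hα
  calc f.rangeProj μ * f.rangeProj ν
      = f.t μ * (star (f.t μ) * f.t ν) * star (f.t ν) := by simp only [rangeProj, mul_assoc]
    _ = ∑ p ∈ P, f.rangeProj (Λ.comp μ p.1) := by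
      rw [f.ck3, finsum_mem_eq_finite_toFinset_sum _ (Λ.finite_MCEPairs hFA μ ν), Finset.mul_sum,
        Finset.sum_mul]
      refine Finset.sum_congr rfl fun p hp => ?_
      obtain ⟨hμ, hν, hμν, -⟩ := hP p hp
      rw [rangeProj, ← mul_assoc, f.mul_eq μ _ hμ, mul_assoc, ← star_mul, f.mul_eq ν _ hν, hμν]
    _ = f.t μ * f.t (Λ.s μ) * star (f.t μ) := by
      rw [hvertex, Finset.sum_image fun p hp q hq => KGraph.injOn_fst_MCEPairs μ ν (hP p hp)
        (hP q hq), Finset.mul_sum, Finset.sum_mul]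
      exact Finset.sum_congr rfl fun p hp => (f.t_mul_rangeProj_mul_star (hP p hp).1).symm
    _ = f.rangeProj μ := by rw [t_mul_t_s, rangeProj]

end CKFamily

/-- Lemma 3.7. For a generalised cycle `(μ, ν)` and any Cuntz–Krieger
family: (i) `t_μ t_μ* ≤ t_ν t_ν*`; (ii) if `(μ, ν)` has no entrance then equality holds;
(iii) if `τ` is an entrance then `t_ν t_ν* − t_μ t_μ* ≥ t_{ντ} t_{ντ}*`. -/
theorem stmt10 {k : ℕ} (Λ : KGraph k) (hFA : Λ.FinitelyAligned)
    (mu nu : Λ.Path) (hgc : Λ.IsGenCycle mu nu)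
    (B : Type*) [NonUnitalCStarAlgebra B] [PartialOrder B] [StarOrderedRing B]
    (f : CKFamily Λ B) :
    f.t mu * star (f.t mu) ≤ f.t nu * star (f.t nu) ∧
    ((¬ ∃ τ, Λ.IsEntrance mu nu τ) →
      f.t mu * star (f.t mu) = f.t nu * star (f.t nu)) ∧
    ∀ τ, Λ.IsEntrance mu nu τ →
      f.t (Λ.comp nu τ) * star (f.t (Λ.comp nu τ)) ≤
        f.t nu * star (f.t nu) - f.t mu * star (f.t mu) := by
  have hP := f.isStarProjection_rangeProj
  have hμν := f.rangeProj_mul_rangeProj_eq_left hFA hgc.2.2.2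
  refine ⟨(hP mu).le_of_mul_eq_left (hP nu) hμν, fun hno => ?_, fun τ ⟨hτ, hτμ⟩ => ?_⟩
  · have hνμ := f.rangeProj_mul_rangeProj_eq_left hFA (μ := nu) (ν := mu) fun τ hτ =>
      Set.nonempty_iff_ne_empty.2 fun h => hno ⟨τ, hτ, h⟩
    exact le_antisymm ((hP mu).le_of_mul_eq_left (hP nu) hμν)
      ((hP nu).le_of_mul_eq_left (hP mu) hνμ)
  · refine (hP _).le_of_mul_eq_right (q := f.rangeProj nu - f.rangeProj mu)
      ((hP mu).sub_of_mul_eq_left (hP nu) hμν) ?_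
    rw [sub_mul, f.rangeProj_mul_rangeProj_comp hτ.symm,
      f.rangeProj_mul_rangeProj_eq_zero ((KGraph.MCE_comm _ _).trans hτμ), sub_zero]
end

section
/- Let Λ be a row-finite k-graph, and suppose that ρ ∈ Λ is a cycle with no entrance; set v := r(ρ) = s(ρ). For each m ∈ ℕ^k such that m ∧ d(ρ) = 0 (coordinatewise minimum), the map P_ρ : vΛ^m → vΛ^m defined by P_ρ(μ) := (ρμ)(0, m) is a bijection. -/
open scoped ComplexOrder ENat

/-!
Since `m ∧ d(ρ) = 0`, a minimal common extension of `μ ∈ vΛ^m` and `ρ` has degree `m + d(ρ)`,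
so it has the form `μα = ρβ` with `β ∈ vΛ^m`; unique factorisation then forces `P_ρ(β) = μ`.
Thus `P_ρ` is a surjection of the finite set `vΛ^m` onto itself, hence a bijection.
-/

theorem Pi.sup_eq_add_of_inf_eq_zero {ι : Type*} {m n : ι → ℕ} (h : m ⊓ n = 0) :
    m ⊔ n = m + n := by
  funext i
  have hi := congrFun h i
  simp only [Pi.inf_apply, Pi.zero_apply] at hi
  simp only [Pi.sup_apply, Pi.add_apply]
  omega

namespace KGraph

variable {k : ℕ} (Λ : KGraph k)

theorem eq_of_comp_eq_comp {a b a' b' : Λ.Path} (hab : Λ.s a = Λ.r b)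
    (hab' : Λ.s a' = Λ.r b') (hd : Λ.d a = Λ.d a') (h : Λ.comp a b = Λ.comp a' b') :
    a = a' := by
  have hdb : Λ.d b' = Λ.d b := by
    have hdeg := Λ.d_comp a b hab
    rw [h, Λ.d_comp a' b' hab', hd] at hdeg
    exact add_left_cancel hdeg
  obtain ⟨p, -, huniq⟩ := Λ.factor (Λ.comp a b) (Λ.d a) (Λ.d b) (Λ.d_comp a b hab)
  have h₁ := huniq (a, b) ⟨rfl, rfl, hab, rfl⟩
  have h₂ := huniq (a', b') ⟨hd.symm, hdb, hab', h.symm⟩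
  exact congrArg Prod.fst (h₁.trans h₂.symm)

theorem r_eq_of_comp_eq_comp {a b a' b' : Λ.Path} (hab : Λ.s a = Λ.r b)
    (hab' : Λ.s a' = Λ.r b') (h : Λ.comp a b = Λ.comp a' b') : Λ.r a = Λ.r a' := by
  rw [← Λ.r_comp a b hab, h, Λ.r_comp a' b' hab']

theorem d_eq_of_mem_MCE_of_comp_eq {μ ν β lam : Λ.Path} (hμν : Λ.d μ ⊓ Λ.d ν = 0)
    (hlam : lam ∈ Λ.MCE μ ν) (hνβ : Λ.s ν = Λ.r β) (hβ : Λ.comp ν β = lam) :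
    Λ.d β = Λ.d μ := by
  have hdeg := hlam.1
  rw [← hβ, Λ.d_comp ν β hνβ, Pi.sup_eq_add_of_inf_eq_zero hμν, add_comm (Λ.d μ)] at hdeg
  exact add_left_cancel hdeg

end KGraph

/-- Lemma 5.5. If `ρ` is a cycle with no entrance in a row-finite
`k`-graph and `m ∧ d(ρ) = 0`, then the map `P_ρ : vΛ^m → vΛ^m`, `P_ρ(μ) = (ρμ)(0, m)`
(characterised by `ρμ = P_ρ(μ)·rest` with `d (P_ρ μ) = m`), is a bijection of `vΛ^m`. -/
theorem stmt12 {k : ℕ} (Λ : KGraph k) (hRF : Λ.RowFinite)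
    (ρ : Λ.Path) (hcyc : Λ.IsCycle ρ)
    (hnoent : ∀ τ, Λ.r τ = Λ.r ρ → (Λ.MCE τ ρ).Nonempty)
    (m : Fin k → ℕ) (hm : m ⊓ Λ.d ρ = 0)
    (P : Λ.Path → Λ.Path)
    (hP : ∀ mu, Λ.r mu = Λ.r ρ → Λ.d mu = m →
      Λ.d (P mu) = m ∧ ∃ rest, Λ.s (P mu) = Λ.r rest ∧
        Λ.comp (P mu) rest = Λ.comp ρ mu) :
    Set.BijOn P {mu : Λ.Path | Λ.r mu = Λ.r ρ ∧ Λ.d mu = m}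
      {mu : Λ.Path | Λ.r mu = Λ.r ρ ∧ Λ.d mu = m} := by
  have hsr : Λ.s ρ = Λ.r ρ := hcyc.2.symm
  have hmaps : Set.MapsTo P {mu | Λ.r mu = Λ.r ρ ∧ Λ.d mu = m}
      {mu | Λ.r mu = Λ.r ρ ∧ Λ.d mu = m} := by
    rintro μ ⟨hrμ, hdμ⟩
    obtain ⟨hdP, rest, hrest, hcomp⟩ := hP μ hrμ hdμ
    exact ⟨Λ.r_eq_of_comp_eq_comp hrest (hsr.trans hrμ.symm) hcomp, hdP⟩
  refine ((hRF _ m (Λ.d_r ρ)).surjOn_iff_bijOn_of_mapsTo hmaps).mp ?_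
  rintro μ ⟨hrμ, hdμ⟩
  obtain ⟨lam, hlam⟩ := hnoent μ hrμ
  obtain ⟨α, hμα, hα⟩ := hlam.2.1
  obtain ⟨β, hρβ, hβ⟩ := hlam.2.2
  have hdβ : Λ.d β = m := hdμ ▸ Λ.d_eq_of_mem_MCE_of_comp_eq (hdμ ▸ hm) hlam hρβ hβ
  have hrβ : Λ.r β = Λ.r ρ := hρβ.symm.trans hsr
  obtain ⟨hdP, rest, hrest, hcomp⟩ := hP β hrβ hdβ
  exact ⟨β, ⟨hrβ, hdβ⟩,
    Λ.eq_of_comp_eq_comp hrest hμα (hdP.trans hdμ.symm) (hcomp.trans (hβ.trans hα.symm))⟩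
end

section
/- Let Λ be a row-finite k-graph, and suppose that ρ ∈ Λ is a cycle with no entrance. For each μ ∈ r(ρ)Λ such that d(μ) ∧ d(ρ) = 0 (coordinatewise minimum) and for each n ∈ ℕ, the set s(μ)Λ^{n·d(ρ)} has exactly one element. Moreover, there exists p ∈ ℕ with p ≥ 1 such that the unique element of s(μ)Λ^{p·d(ρ)} is a cycle. -/
open scoped ComplexOrder ENat

/-
Since `ρ` has no entrance, every path at `r(ρ)` of degree `n·d(ρ)` is `ρⁿ`. On the set
`F = r(ρ)Λ^{d(μ)}`, finite by row-finiteness, let `σ(ζ) = (ρζ)(0, d(μ))`. A minimal common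
extension `ηα = ρβ` of `η ∈ F` with `ρ` has degree `d(μ) + d(ρ)` because `d(μ) ∧ d(ρ) = 0`, so
`σ(β) = η`: `σ` is onto, hence a permutation of `F`. Unique factorisation gives `ρⁿζ = σⁿ(ζ)λ`
with `d(λ) = n·d(ρ)`, and conversely each `λ ∈ s(μ)Λ^{n·d(ρ)}` satisfies `μλ = ρⁿζ` for the
unique `ζ` with `σⁿ(ζ) = μ`. For a period `p` of `μ` under `σ` this reads `μλ = ρᵖμ`, so
`s(λ) = s(μ) = r(λ)`.
-/

theorem Set.InjOn.exists_pos_iterate_eq_self {α : Type*} {f : α → α} {s : Set α}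
    (hs : s.Finite) (hf : Set.MapsTo f s s) (hinj : Set.InjOn f s) {x : α} (hx : x ∈ s) :
    ∃ n, 0 < n ∧ f^[n] x = x := by
  have := hs.to_subtype
  obtain ⟨n, hn, hper⟩ :=
    Function.mem_periodicPts.mp ((hf.restrict_inj.mpr hinj).mem_periodicPts ⟨x, hx⟩)
  refine ⟨n, hn, ?_⟩
  have := congrArg Subtype.val hper
  rwa [hf.iterate_restrict] at this

namespace KGraph

variable {k : ℕ} (Λ : KGraph k)

theorem eq_and_eq_of_comp_eq_comp {α β α' β' : Λ.Path} (h : Λ.s α = Λ.r β)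
    (h' : Λ.s α' = Λ.r β') (hd : Λ.d α = Λ.d α') (heq : Λ.comp α β = Λ.comp α' β') :
    α = α' ∧ β = β' := by
  have hdβ : Λ.d β' = Λ.d β := by
    have := Λ.d_comp α' β' h'
    rw [← heq, Λ.d_comp α β h, hd] at this
    exact (add_left_cancel this).symm
  exact Prod.ext_iff.mp <| (Λ.factor _ _ _ (Λ.d_comp α β h)).unique (y₁ := (α, β))
    (y₂ := (α', β')) ⟨rfl, rfl, h, rfl⟩ ⟨hd.symm, hdβ, h', heq.symm⟩

open Classical in
/-- `λ(0, m)`; a junk value when `m ≰ d(λ)`. -/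
noncomputable def initSeg (lam : Λ.Path) (m : Fin k → ℕ) : Λ.Path :=
  if h : m ≤ Λ.d lam then
    (Λ.factor lam m (Λ.d lam - m) (add_tsub_cancel_of_le h).symm).exists.choose.1
  else lam

theorem initSeg_spec {lam : Λ.Path} {m : Fin k → ℕ} (h : m ≤ Λ.d lam) :
    ∃ β, Λ.d (Λ.initSeg lam m) = m ∧ Λ.d β = Λ.d lam - m ∧
      Λ.s (Λ.initSeg lam m) = Λ.r β ∧ Λ.comp (Λ.initSeg lam m) β = lam := by
  rw [initSeg, dif_pos h]
  exact ⟨_, (Λ.factor lam m (Λ.d lam - m) (add_tsub_cancel_of_le h).symm).exists.choose_spec⟩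

theorem initSeg_comp {α β : Λ.Path} (h : Λ.s α = Λ.r β) :
    Λ.initSeg (Λ.comp α β) (Λ.d α) = α := by
  obtain ⟨γ, hd, -, hs, hc⟩ :=
    Λ.initSeg_spec (m := Λ.d α) (by rw [Λ.d_comp α β h]; exact le_self_add)
  exact (Λ.eq_and_eq_of_comp_eq_comp hs h hd hc).1

theorem exists_comp_eq_of_MCE_nonempty {η ρ : Λ.Path} (hne : (Λ.MCE η ρ).Nonempty)
    (hle : Λ.d ρ ≤ Λ.d η) : ∃ β, Λ.s ρ = Λ.r β ∧ Λ.comp ρ β = η := by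
  obtain ⟨_, hχ, ⟨a, ha, rfl⟩, β, hβ, hβχ⟩ := hne
  have hda : Λ.d a = 0 := by
    have := Λ.d_comp η a ha
    rw [hχ, sup_of_le_left hle] at this
    exact add_eq_left.mp this.symm
  have hηa : Λ.comp η a = η := by rw [← Λ.r_vertex a hda, ← ha, Λ.comp_id]
  exact ⟨β, hβ, hβχ.trans hηa⟩

def pow (ρ : Λ.Path) : ℕ → Λ.Path
  | 0 => Λ.r ρ
  | n + 1 => Λ.comp ρ (pow ρ n)

def HasNoEntrance (ρ : Λ.Path) : Prop :=
  ∀ τ, Λ.r τ = Λ.r ρ → (Λ.MCE τ ρ).Nonempty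

def degPaths (v : Λ.Path) (m : Fin k → ℕ) : Set Λ.Path :=
  {lam | Λ.r lam = v ∧ Λ.d lam = m}

noncomputable def rotate (ρ : Λ.Path) (m : Fin k → ℕ) (ζ : Λ.Path) : Λ.Path :=
  Λ.initSeg (Λ.comp ρ ζ) m

variable {Λ} {ρ : Λ.Path}

theorem r_pow (hρ : Λ.r ρ = Λ.s ρ) (n : ℕ) : Λ.r (Λ.pow ρ n) = Λ.r ρ := by
  induction n with
  | zero => exact Λ.r_vertex _ (Λ.d_r ρ)
  | succ n ih => exact Λ.r_comp ρ _ (by rw [← hρ, ih])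

theorem s_pow (hρ : Λ.r ρ = Λ.s ρ) (n : ℕ) : Λ.s (Λ.pow ρ n) = Λ.r ρ := by
  induction n with
  | zero => exact Λ.s_vertex _ (Λ.d_r ρ)
  | succ n ih => rw [pow, Λ.s_comp ρ _ (by rw [← hρ, r_pow hρ]), ih]

theorem HasNoEntrance.eq_pow (hρ : Λ.r ρ = Λ.s ρ) (hne : Λ.HasNoEntrance ρ) {n : ℕ}
    {η : Λ.Path} (hr : Λ.r η = Λ.r ρ) (hd : Λ.d η = n • Λ.d ρ) : η = Λ.pow ρ n := by
  induction n generalizing η with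
  | zero =>
    rw [zero_smul] at hd
    rw [pow, ← hr, Λ.r_vertex η hd]
  | succ n ih =>
    obtain ⟨β, hβ, rfl⟩ := Λ.exists_comp_eq_of_MCE_nonempty (hne η hr)
      (by rw [hd, succ_nsmul']; exact le_self_add)
    have hdβ : Λ.d β = n • Λ.d ρ := by
      rw [Λ.d_comp ρ β hβ, succ_nsmul'] at hd
      exact add_left_cancel hd
    rw [ih (by rw [← hβ, ← hρ]) hdβ, pow]

variable {m : Fin k → ℕ}

theorem exists_comp_rotate (hρ : Λ.r ρ = Λ.s ρ) {ζ : Λ.Path} (hζ : ζ ∈ Λ.degPaths (Λ.r ρ) m) :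
    Λ.rotate ρ m ζ ∈ Λ.degPaths (Λ.r ρ) m ∧ ∃ τ, Λ.d τ = Λ.d ρ ∧
      Λ.s (Λ.rotate ρ m ζ) = Λ.r τ ∧ Λ.comp (Λ.rotate ρ m ζ) τ = Λ.comp ρ ζ := by
  have hc : Λ.s ρ = Λ.r ζ := by rw [hζ.1, hρ]
  have hd : Λ.d (Λ.comp ρ ζ) = m + Λ.d ρ := by rw [Λ.d_comp ρ ζ hc, hζ.2, add_comm]
  obtain ⟨τ, hσd, hτd, hστ, hcomp⟩ := Λ.initSeg_spec (m := m) (by rw [hd]; exact le_self_add)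
  rw [hd, add_tsub_cancel_left] at hτd
  refine ⟨⟨?_, hσd⟩, τ, hτd, hστ, hcomp⟩
  rw [rotate, ← Λ.r_comp _ _ hστ, hcomp, Λ.r_comp ρ ζ hc]

theorem mapsTo_rotate (hρ : Λ.r ρ = Λ.s ρ) :
    Set.MapsTo (Λ.rotate ρ m) (Λ.degPaths (Λ.r ρ) m) (Λ.degPaths (Λ.r ρ) m) :=
  fun _ hζ => (exists_comp_rotate hρ hζ).1

theorem surjOn_rotate (hρ : Λ.r ρ = Λ.s ρ) (hne : Λ.HasNoEntrance ρ) (hm : m ⊓ Λ.d ρ = 0) :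
    Set.SurjOn (Λ.rotate ρ m) (Λ.degPaths (Λ.r ρ) m) (Λ.degPaths (Λ.r ρ) m) := by
  intro η hη
  obtain ⟨_, hχ, ⟨a, ha, rfl⟩, β, hβ, hβχ⟩ := hne η hη.1
  have hsup : m ⊔ Λ.d ρ = m + Λ.d ρ := by
    ext i
    have := congrFun hm i
    simp only [Pi.inf_apply, Pi.sup_apply, Pi.add_apply, Pi.zero_apply] at this ⊢
    omega
  have hdβ : Λ.d β = m := by
    have := Λ.d_comp ρ β hβ
    rw [hβχ, hχ, hη.2, hsup, add_comm] at this
    exact (add_left_cancel this).symm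
  refine ⟨β, ⟨by rw [← hβ, hρ], hdβ⟩, ?_⟩
  rw [rotate, hβχ, ← hη.2]
  exact Λ.initSeg_comp ha

theorem exists_comp_iterate_rotate (hρ : Λ.r ρ = Λ.s ρ) {ζ : Λ.Path}
    (hζ : ζ ∈ Λ.degPaths (Λ.r ρ) m) (n : ℕ) :
    ∃ lam, Λ.r lam = Λ.s ((Λ.rotate ρ m)^[n] ζ) ∧ Λ.d lam = n • Λ.d ρ ∧
      Λ.comp ((Λ.rotate ρ m)^[n] ζ) lam = Λ.comp (Λ.pow ρ n) ζ := by
  induction n with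
  | zero =>
    refine ⟨Λ.s ζ, Λ.r_vertex _ (Λ.d_s ζ), by rw [Λ.d_s, zero_smul], ?_⟩
    rw [Function.iterate_zero_apply, Λ.comp_id, pow, ← hζ.1, Λ.id_comp]
  | succ n ih =>
    obtain ⟨lam, hr, hd, hc⟩ := ih
    set η := (Λ.rotate ρ m)^[n] ζ
    have hη : η ∈ Λ.degPaths (Λ.r ρ) m := (mapsTo_rotate hρ).iterate n hζ
    obtain ⟨-, τ, hτd, hστ, hστc⟩ := exists_comp_rotate hρ hη
    have hρη : Λ.s ρ = Λ.r η := by rw [hη.1, hρ]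
    have hτlam : Λ.s τ = Λ.r lam := by
      rw [hr, ← Λ.s_comp _ _ hστ, hστc, Λ.s_comp ρ η hρη]
    refine ⟨Λ.comp τ lam, ?_, ?_, ?_⟩
    · rw [Λ.r_comp τ lam hτlam, Function.iterate_succ_apply', hστ]
    · rw [Λ.d_comp τ lam hτlam, hτd, hd, succ_nsmul']
    · rw [Function.iterate_succ_apply', ← Λ.comp_assoc _ _ _ hστ hτlam, hστc,
        Λ.comp_assoc ρ η lam hρη hr.symm, hc, pow,
        ← Λ.comp_assoc ρ _ ζ (by rw [r_pow hρ, hρ]) (by rw [s_pow hρ, hζ.1])]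

theorem exists_mem_iterate_rotate_eq (hρ : Λ.r ρ = Λ.s ρ) (hne : Λ.HasNoEntrance ρ)
    {n : ℕ} {η lam : Λ.Path} (hη : η ∈ Λ.degPaths (Λ.r ρ) m) (hr : Λ.r lam = Λ.s η)
    (hd : Λ.d lam = n • Λ.d ρ) :
    ∃ ζ ∈ Λ.degPaths (Λ.r ρ) m, (Λ.rotate ρ m)^[n] ζ = η ∧
      Λ.comp η lam = Λ.comp (Λ.pow ρ n) ζ := by
  have hdc : Λ.d (Λ.comp η lam) = n • Λ.d ρ + m := by
    rw [Λ.d_comp η lam hr.symm, hd, hη.2, add_comm]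
  obtain ⟨⟨α, ζ⟩, ⟨hα, hζd, hαζ, hc⟩, -⟩ := Λ.factor _ _ _ hdc
  have hαr : Λ.r α = Λ.r ρ := by
    rw [← Λ.r_comp α ζ hαζ, hc, Λ.r_comp η lam hr.symm, hη.1]
  obtain rfl : α = Λ.pow ρ n := hne.eq_pow hρ hαr hα
  have hζ : ζ ∈ Λ.degPaths (Λ.r ρ) m := ⟨by rw [← hαζ, s_pow hρ], hζd⟩
  obtain ⟨lam', hr', -, hc'⟩ := exists_comp_iterate_rotate hρ hζ n
  have hdeq : Λ.d ((Λ.rotate ρ m)^[n] ζ) = Λ.d η := by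
    rw [((mapsTo_rotate hρ).iterate n hζ).2, hη.2]
  exact ⟨ζ, hζ, (Λ.eq_and_eq_of_comp_eq_comp hr'.symm hr.symm hdeq (hc'.trans hc)).1, hc.symm⟩

theorem comp_eq_pow_comp_of_iterate_rotate_eq (hρ : Λ.r ρ = Λ.s ρ) (hne : Λ.HasNoEntrance ρ)
    (hinj : Set.InjOn (Λ.rotate ρ m) (Λ.degPaths (Λ.r ρ) m)) {n : ℕ} {ζ η lam : Λ.Path}
    (hζ : ζ ∈ Λ.degPaths (Λ.r ρ) m) (hζη : (Λ.rotate ρ m)^[n] ζ = η) (hr : Λ.r lam = Λ.s η)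
    (hd : Λ.d lam = n • Λ.d ρ) : Λ.comp η lam = Λ.comp (Λ.pow ρ n) ζ := by
  have hη : η ∈ Λ.degPaths (Λ.r ρ) m := hζη ▸ (mapsTo_rotate hρ).iterate n hζ
  obtain ⟨ζ', hζ', hζ'η, hc⟩ := exists_mem_iterate_rotate_eq hρ hne hη hr hd
  rw [hc, hinj.iterate (mapsTo_rotate hρ) n hζ' hζ (hζ'η.trans hζη.symm)]

end KGraph

/-- Lemma 5.6. If `ρ` is a cycle with no entrance in a row-finite
`k`-graph and `μ ∈ r(ρ)Λ` has `d(μ) ∧ d(ρ) = 0`, then for every `n ∈ ℕ` the set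
`s(μ)Λ^{n·d(ρ)}` is a singleton, and for some `p ≥ 1` its unique element is a cycle. -/
theorem stmt13 {k : ℕ} (Λ : KGraph k) (hRF : Λ.RowFinite)
    (ρ : Λ.Path) (hcyc : Λ.IsCycle ρ)
    (hnoent : ∀ τ, Λ.r τ = Λ.r ρ → (Λ.MCE τ ρ).Nonempty)
    (mu : Λ.Path) (hmu : Λ.r mu = Λ.r ρ) (hm : Λ.d mu ⊓ Λ.d ρ = 0) :
    (∀ n : ℕ, ∃! lam : Λ.Path, Λ.r lam = Λ.s mu ∧ Λ.d lam = n • Λ.d ρ) ∧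
    ∃ p : ℕ, 1 ≤ p ∧ ∀ lam : Λ.Path,
      Λ.r lam = Λ.s mu → Λ.d lam = p • Λ.d ρ → Λ.IsCycle lam := by
  have hρ : Λ.r ρ = Λ.s ρ := hcyc.2
  have hμ : mu ∈ Λ.degPaths (Λ.r ρ) (Λ.d mu) := ⟨hmu, rfl⟩
  have hfin : (Λ.degPaths (Λ.r ρ) (Λ.d mu)).Finite := hRF _ _ (Λ.d_r ρ)
  have hmaps := KGraph.mapsTo_rotate (m := Λ.d mu) hρ
  have hsurj := KGraph.surjOn_rotate hρ hnoent hm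
  have hinj := ((hfin.surjOn_iff_bijOn_of_mapsTo hmaps).mp hsurj).injOn
  refine ⟨fun n => ?_, ?_⟩
  · obtain ⟨ζ, hζ, hζμ⟩ := hsurj.iterate n hμ
    obtain ⟨lam₀, hr₀, hd₀, hc₀⟩ := KGraph.exists_comp_iterate_rotate hρ hζ n
    rw [hζμ] at hr₀ hc₀
    refine ⟨lam₀, ⟨hr₀, hd₀⟩, fun lam ⟨hr, hd⟩ => ?_⟩
    have hc := KGraph.comp_eq_pow_comp_of_iterate_rotate_eq hρ hnoent hinj hζ hζμ hr hd
    exact (Λ.eq_and_eq_of_comp_eq_comp hr.symm hr₀.symm rfl (hc.trans hc₀.symm)).2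
  · obtain ⟨p, hp, hper⟩ := hinj.exists_pos_iterate_eq_self hfin hmaps hμ
    refine ⟨p, hp, fun lam hr hd => ⟨by rw [hd]; exact smul_ne_zero hp.ne' hcyc.1, ?_⟩⟩
    have hc := KGraph.comp_eq_pow_comp_of_iterate_rotate_eq hρ hnoent hinj hμ hper hr hd
    rw [hr, ← Λ.s_comp mu lam hr.symm, hc, Λ.s_comp _ mu (by rw [KGraph.s_pow hρ, hmu])]
end

section
/- Let Λ be a row-finite locally convex k-graph such that Λ⁰ is finite with N := |Λ⁰|, and suppose no cycle in Λ has an entrance. Then for every λ ∈ Λ^{≤(N,…,N)}, the vertex s(λ) lies on an initial cycle of Λ, i.e. there is an initial cycle μ and n ∈ ℕ^k with n ≤ d(μ^∞) and μ^∞(n) = s(λ). -/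
open scoped ComplexOrder ENat

/-! Let `v = s(λ)`. If `vΛ^{eᵢ} ≠ ∅` then `d(λ)ᵢ = N`, because `λ ∈ Λ^{≤(N,…,N)}`; so the
final segment of `λ` of degree `N eᵢ` passes through `N + 1` vertices and, by pigeonhole, contains
a cycle `c` followed by a tail `t` ending at `v`. The cycle `c^N` has no entrance and is longer
than `t`, so `t` is an initial segment of `c^N`, and rotating `c^N` gives a cycle at `v` of
positive degree in direction `i`. Composing these cycles over all `i` gives an initial cycle `μ`
at `v`, and `μ^∞` is assembled from the powers of `μ`. -/

namespace KGraph

variable {k : ℕ} (Λ : KGraph k)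

lemma r_r (lam : Λ.Path) : Λ.r (Λ.r lam) = Λ.r lam := Λ.r_vertex _ (Λ.d_r lam)
lemma s_r (lam : Λ.Path) : Λ.s (Λ.r lam) = Λ.r lam := Λ.s_vertex _ (Λ.d_r lam)
lemma r_s (lam : Λ.Path) : Λ.r (Λ.s lam) = Λ.s lam := Λ.r_vertex _ (Λ.d_s lam)

lemma comp_eq_left {a b : Λ.Path} (hs : Λ.s a = Λ.r b) (hd : Λ.d (Λ.comp a b) = Λ.d a) :
    Λ.comp a b = a := by
  have hb : Λ.d b = 0 := by
    rw [Λ.d_comp a b hs] at hd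
    exact add_eq_left.mp hd
  have hb' : b = Λ.s a := by rw [hs, Λ.r_vertex b hb]
  rw [hb', Λ.comp_id]

lemma factor_unique_s16 {a b a' b' : Λ.Path} (hs : Λ.s a = Λ.r b) (hs' : Λ.s a' = Λ.r b')
    (hd : Λ.d a = Λ.d a') (h : Λ.comp a b = Λ.comp a' b') : a = a' ∧ b = b' := by
  have hdb : Λ.d b = Λ.d b' := by
    have := Λ.d_comp a' b' hs'
    rw [← h, Λ.d_comp a b hs, hd] at this
    exact add_left_cancel this
  obtain ⟨_, _, huniq⟩ := Λ.factor (Λ.comp a b) (Λ.d a) (Λ.d b) (Λ.d_comp a b hs)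
  have h₁ := huniq (a, b) ⟨rfl, rfl, hs, rfl⟩
  have h₂ := huniq (a', b') ⟨hd.symm, hdb.symm, hs', h.symm⟩
  exact Prod.ext_iff.mp (h₁.trans h₂.symm)

open Classical in
/-- The factorisation `λ = λ(0, m) λ(m, d λ)`; junk `(λ, λ)` unless `m ≤ d λ`. -/
noncomputable def split (lam : Λ.Path) (m : Fin k → ℕ) : Λ.Path × Λ.Path :=
  if h : m ≤ Λ.d lam then
    (Λ.factor lam m (Λ.d lam - m) (add_tsub_cancel_of_le h).symm).choose
  else (lam, lam)

lemma split_spec (lam : Λ.Path) {m : Fin k → ℕ} (h : m ≤ Λ.d lam) :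
    Λ.d (Λ.split lam m).1 = m ∧ Λ.d (Λ.split lam m).2 = Λ.d lam - m ∧
      Λ.s (Λ.split lam m).1 = Λ.r (Λ.split lam m).2 ∧
      Λ.comp (Λ.split lam m).1 (Λ.split lam m).2 = lam := by
  rw [split, dif_pos h]
  exact (Λ.factor lam m (Λ.d lam - m) (add_tsub_cancel_of_le h).symm).choose_spec.1

lemma split_comp {a b : Λ.Path} (hs : Λ.s a = Λ.r b) :
    Λ.split (Λ.comp a b) (Λ.d a) = (a, b) := by
  have h : Λ.d a ≤ Λ.d (Λ.comp a b) := by rw [Λ.d_comp a b hs]; exact le_self_add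
  obtain ⟨h₁, -, h₃, h₄⟩ := Λ.split_spec _ h
  obtain ⟨e₁, e₂⟩ := Λ.factor_unique_s16 h₃ hs h₁ h₄
  exact Prod.ext e₁ e₂

lemma split_zero (lam : Λ.Path) : Λ.split lam 0 = (Λ.r lam, lam) := by
  simpa only [Λ.id_comp, Λ.d_r] using Λ.split_comp (Λ.s_r lam)

lemma split_top (lam : Λ.Path) : Λ.split lam (Λ.d lam) = (lam, Λ.s lam) := by
  simpa only [Λ.comp_id] using Λ.split_comp (Λ.r_s lam).symm

/-- The segment `λ(p, q)`, meaningful for `p ≤ q ≤ d λ`. -/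
noncomputable def seg (lam : Λ.Path) (p q : Fin k → ℕ) : Λ.Path :=
  (Λ.split (Λ.split lam q).1 p).2

section seg

variable (lam : Λ.Path) {p q u : Fin k → ℕ}

lemma seg_top : Λ.seg lam q (Λ.d lam) = (Λ.split lam q).2 := by
  rw [seg, split_top]

lemma seg_vertex (hq : q ≤ Λ.d lam) : Λ.seg lam q q = Λ.s (Λ.split lam q).1 := by
  have h := Λ.split_top (Λ.split lam q).1
  rw [(Λ.split_spec lam hq).1] at h
  rw [seg, h]

lemma seg_zero_zero : Λ.seg lam 0 0 = Λ.r lam := by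
  rw [Λ.seg_vertex lam zero_le, split_zero, s_r]

lemma seg_top_top : Λ.seg lam (Λ.d lam) (Λ.d lam) = Λ.s lam := by
  rw [Λ.seg_vertex lam le_rfl, split_top]

lemma split_eq_comp_seg (hpq : p ≤ q) (hq : q ≤ Λ.d lam) :
    Λ.split lam p =
      ((Λ.split (Λ.split lam q).1 p).1, Λ.comp (Λ.seg lam p q) (Λ.split lam q).2) ∧
      Λ.s (Λ.seg lam p q) = Λ.r (Λ.split lam q).2 := by
  obtain ⟨hA₁, -, hA₃, hA₄⟩ := Λ.split_spec lam hq
  obtain ⟨hB₁, -, hB₃, hB₄⟩ := Λ.split_spec (Λ.split lam q).1 (hA₁ ▸ hpq)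
  have hs : Λ.s (Λ.seg lam p q) = Λ.r (Λ.split lam q).2 := by
    rw [seg, ← Λ.s_comp _ _ hB₃, hB₄, hA₃]
  refine ⟨?_, hs⟩
  have h := Λ.split_comp (a := (Λ.split (Λ.split lam q).1 p).1)
    (b := Λ.comp (Λ.seg lam p q) (Λ.split lam q).2) (by rw [Λ.r_comp _ _ hs]; exact hB₃)
  rwa [seg, ← Λ.comp_assoc _ _ _ hB₃ hs, hB₄, hA₄, hB₁] at h

lemma d_seg (hpq : p ≤ q) (hq : q ≤ Λ.d lam) : Λ.d (Λ.seg lam p q) = q - p := by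
  have hq₁ := (Λ.split_spec lam hq).1
  rw [seg, (Λ.split_spec _ (by rw [hq₁]; exact hpq)).2.1, hq₁]

lemma r_seg (hpq : p ≤ q) (hq : q ≤ Λ.d lam) : Λ.r (Λ.seg lam p q) = Λ.seg lam p p := by
  have hq₁ := (Λ.split_spec lam hq).1
  rw [Λ.seg_vertex lam (hpq.trans hq), (Λ.split_eq_comp_seg lam hpq hq).1]
  exact (Λ.split_spec _ (by rw [hq₁]; exact hpq)).2.2.1.symm

lemma s_seg (hpq : p ≤ q) (hq : q ≤ Λ.d lam) : Λ.s (Λ.seg lam p q) = Λ.seg lam q q := by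
  rw [(Λ.split_eq_comp_seg lam hpq hq).2, Λ.seg_vertex lam hq]
  exact (Λ.split_spec lam hq).2.2.1.symm

lemma seg_eq_seg_split (hqu : q ≤ u) (hu : u ≤ Λ.d lam) :
    Λ.seg lam p q = Λ.seg (Λ.split lam u).1 p q := by
  rw [seg, seg, (Λ.split_eq_comp_seg lam hqu hu).1]

lemma comp_seg (hpq : p ≤ q) (hqu : q ≤ u) (hu : u ≤ Λ.d lam) :
    Λ.comp (Λ.seg lam p q) (Λ.seg lam q u) = Λ.seg lam p u := by
  rw [Λ.seg_eq_seg_split lam hqu hu, Λ.seg_eq_seg_split lam le_rfl hu,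
    Λ.seg_eq_seg_split lam le_rfl hu]
  set L := (Λ.split lam u).1
  have hd : Λ.d L = u := (Λ.split_spec lam hu).1
  rw [← hd] at hqu ⊢
  rw [Λ.seg_top L, Λ.seg_top L, (Λ.split_eq_comp_seg L hpq hqu).1]

end seg

lemma seg_comp_left {a b : Λ.Path} (hs : Λ.s a = Λ.r b) {p q : Fin k → ℕ}
    (hq : q ≤ Λ.d a) : Λ.seg (Λ.comp a b) p q = Λ.seg a p q := by
  have hu : Λ.d a ≤ Λ.d (Λ.comp a b) := by rw [Λ.d_comp a b hs]; exact le_self_add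
  rw [Λ.seg_eq_seg_split _ hq hu, Λ.split_comp hs]

lemma seg_comp_right {a b : Λ.Path} (hs : Λ.s a = Λ.r b) :
    Λ.seg (Λ.comp a b) (Λ.d a) (Λ.d (Λ.comp a b)) = b := by
  rw [Λ.seg_top, Λ.split_comp hs]

noncomputable def pathPow (mu : Λ.Path) : ℕ → Λ.Path
  | 0 => Λ.r mu
  | n + 1 => Λ.comp (pathPow mu n) mu

section pathPow

variable {mu : Λ.Path}

lemma s_pathPow (h : Λ.r mu = Λ.s mu) (n : ℕ) : Λ.s (Λ.pathPow mu n) = Λ.r mu := by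
  induction n with
  | zero => exact Λ.s_r mu
  | succ n ih => rw [pathPow, Λ.s_comp _ _ ih, h]

lemma r_pathPow (h : Λ.r mu = Λ.s mu) (n : ℕ) : Λ.r (Λ.pathPow mu n) = Λ.r mu := by
  induction n with
  | zero => exact Λ.r_r mu
  | succ n ih => rw [pathPow, Λ.r_comp _ _ (Λ.s_pathPow h n), ih]

lemma d_pathPow (h : Λ.r mu = Λ.s mu) (n : ℕ) : Λ.d (Λ.pathPow mu n) = n • Λ.d mu := by
  induction n with
  | zero => rw [pathPow, Λ.d_r, zero_nsmul]
  | succ n ih => rw [pathPow, Λ.d_comp _ _ (Λ.s_pathPow h n), ih, succ_nsmul]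

lemma pathPow_add (h : Λ.r mu = Λ.s mu) (m n : ℕ) :
    Λ.pathPow mu (m + n) = Λ.comp (Λ.pathPow mu m) (Λ.pathPow mu n) := by
  induction n with
  | zero => rw [add_zero, pathPow, ← Λ.s_pathPow h m, Λ.comp_id]
  | succ n ih =>
    rw [← add_assoc, pathPow, ih, pathPow,
      Λ.comp_assoc _ _ _ ((Λ.s_pathPow h m).trans (Λ.r_pathPow h n).symm) (Λ.s_pathPow h n)]

lemma seg_pathPow_of_le (h : Λ.r mu = Λ.s mu) {p q : Fin k → ℕ} {m n : ℕ}
    (hq : q ≤ m • Λ.d mu) (hmn : m ≤ n) :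
    Λ.seg (Λ.pathPow mu n) p q = Λ.seg (Λ.pathPow mu m) p q := by
  obtain ⟨n, rfl⟩ := Nat.exists_eq_add_of_le hmn
  rw [Λ.pathPow_add h, Λ.seg_comp_left _ (by rwa [Λ.d_pathPow h])]
  exact (Λ.s_pathPow h m).trans (Λ.r_pathPow h n).symm

end pathPow

lemma eq_zero_of_le_degInf {mu : Λ.Path} {q : Fin k → ℕ}
    (hq : ∀ i, (q i : ℕ∞) ≤ Λ.degInf mu i) {i : Fin k} (hi : Λ.d mu i = 0) : q i = 0 := by
  simpa [degInf, hi] using hq i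

lemma le_sum_nsmul_of_le_degInf {mu : Λ.Path} {q : Fin k → ℕ}
    (hq : ∀ i, (q i : ℕ∞) ≤ Λ.degInf mu i) : q ≤ (∑ i, q i) • Λ.d mu := by
  intro i
  by_cases hi : Λ.d mu i = 0
  · simp [Λ.eq_zero_of_le_degInf hq hi]
  · calc q i ≤ ∑ j, q j := Finset.single_le_sum (fun j _ => Nat.zero_le (q j)) (Finset.mem_univ i)
      _ ≤ (∑ j, q j) * Λ.d mu i := Nat.le_mul_of_pos_right _ (Nat.pos_of_ne_zero hi)

/-- `∑ᵢ qᵢ` is merely some `T` with `q ≤ T • d(μ)` whenever `q ≤ d(μ^∞)`; by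
`seg_pathPow_of_le` every such `T` gives the same segment. -/
noncomputable def infIterate (mu : Λ.Path) (p q : Fin k → ℕ) : Λ.Path :=
  Λ.seg (Λ.pathPow mu (∑ i, q i)) p q

lemma infIterate_eq_seg_pathPow {mu : Λ.Path} (h : Λ.r mu = Λ.s mu) {p q u : Fin k → ℕ}
    (hqu : q ≤ u) (hu : ∀ i, (u i : ℕ∞) ≤ Λ.degInf mu i) {T : ℕ} (hT : u ≤ T • Λ.d mu) :
    Λ.infIterate mu p q = Λ.seg (Λ.pathPow mu T) p q := by
  have hq : ∀ i, (q i : ℕ∞) ≤ Λ.degInf mu i := fun i => (Nat.cast_le.mpr (hqu i)).trans (hu i)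
  rw [infIterate, ← Λ.seg_pathPow_of_le h (Λ.le_sum_nsmul_of_le_degInf hq) (le_max_left _ T),
    Λ.seg_pathPow_of_le h (hqu.trans hT) (le_max_right _ _)]

lemma isInfIterate_infIterate {mu : Λ.Path} (h : Λ.r mu = Λ.s mu) :
    Λ.IsInfIterate mu (Λ.infIterate mu) := by
  refine ⟨⟨?_, ?_, ?_⟩, ?_, ?_⟩
  · intro p q hpq hq
    have hT := Λ.le_sum_nsmul_of_le_degInf hq
    rw [Λ.infIterate_eq_seg_pathPow h le_rfl hq hT,
      Λ.d_seg _ hpq (by rwa [Λ.d_pathPow h])]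
  · intro p q hpq hq
    have hT := Λ.le_sum_nsmul_of_le_degInf hq
    rw [Λ.infIterate_eq_seg_pathPow h le_rfl hq hT, Λ.infIterate_eq_seg_pathPow h hpq hq hT,
      Λ.infIterate_eq_seg_pathPow h le_rfl hq hT, Λ.r_seg _ hpq (by rwa [Λ.d_pathPow h]),
      Λ.s_seg _ hpq (by rwa [Λ.d_pathPow h])]
    exact ⟨rfl, rfl⟩
  · intro p q u hpq hqu hu
    have hT := Λ.le_sum_nsmul_of_le_degInf hu
    rw [Λ.infIterate_eq_seg_pathPow h hqu hu hT, Λ.infIterate_eq_seg_pathPow h le_rfl hu hT,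
      Λ.infIterate_eq_seg_pathPow h le_rfl hu hT, Λ.comp_seg _ hpq hqu (by rwa [Λ.d_pathPow h])]
  · simp only [infIterate, Pi.zero_apply, Finset.sum_const_zero, pathPow, seg_zero_zero, r_r]
  · intro n
    have hu : ∀ i, (((n + 1) • Λ.d mu) i : ℕ∞) ≤ Λ.degInf mu i := fun i => by
      by_cases hi : Λ.d mu i = 0 <;> simp [degInf, hi]
    rw [Λ.infIterate_eq_seg_pathPow h le_rfl hu le_rfl, ← Λ.d_pathPow h n, ← Λ.d_pathPow h,
      pathPow, Λ.seg_comp_right (Λ.s_pathPow h n)]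

lemma exists_comp_eq_of_mce_nonempty {t c : Λ.Path} (hmce : (Λ.MCE t c).Nonempty)
    (hle : Λ.d t ≤ Λ.d c) : ∃ α, Λ.s t = Λ.r α ∧ Λ.comp t α = c := by
  obtain ⟨ρ, hρ, ⟨α, hα, rfl⟩, β, hβ, hcβ⟩ := hmce
  refine ⟨α, hα, ?_⟩
  rw [← hcβ, Λ.comp_eq_left hβ (by rw [hcβ, hρ, sup_of_le_right hle])]

/-- As `c` has no entrance, `t` is an initial segment of `c`; rotating `c` gives the cycle. -/
lemma exists_cycle_at_s_of_le {c t : Λ.Path} (hnoent : Λ.NoCycleHasEntrance)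
    (hc : Λ.IsCycle c) (hrt : Λ.r t = Λ.r c) (hle : Λ.d t ≤ Λ.d c) :
    ∃ w, Λ.r w = Λ.s t ∧ Λ.s w = Λ.s t ∧ Λ.d w = Λ.d c := by
  obtain ⟨α, hα, hc_eq⟩ := Λ.exists_comp_eq_of_mce_nonempty (hnoent c hc t hrt) hle
  have hsα : Λ.s α = Λ.r t := by rw [hrt, hc.2, ← hc_eq, Λ.s_comp _ _ hα]
  refine ⟨Λ.comp α t, by rw [Λ.r_comp _ _ hsα, hα], by rw [Λ.s_comp _ _ hsα], ?_⟩
  rw [Λ.d_comp _ _ hsα, add_comm, ← Λ.d_comp _ _ hα, hc_eq]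

lemma IsCycle.pathPow {c : Λ.Path} (hc : Λ.IsCycle c) {n : ℕ} (hn : 0 < n) :
    Λ.IsCycle (Λ.pathPow c n) := by
  refine ⟨?_, by rw [Λ.r_pathPow hc.2, Λ.s_pathPow hc.2]⟩
  rw [Λ.d_pathPow hc.2]
  exact smul_ne_zero hn.ne' hc.1

def loopDegrees (v : Λ.Path) (hv : Λ.IsVertex v) : AddSubmonoid (Fin k → ℕ) where
  carrier := {n | ∃ w, Λ.r w = v ∧ Λ.s w = v ∧ Λ.d w = n}
  zero_mem' := ⟨v, Λ.r_vertex v hv, Λ.s_vertex v hv, hv⟩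
  add_mem' := by
    rintro _ _ ⟨w, hr, hs, rfl⟩ ⟨w', hr', hs', rfl⟩
    have hw : Λ.s w = Λ.r w' := hs.trans hr'.symm
    exact ⟨Λ.comp w w', by rw [Λ.r_comp _ _ hw, hr], by rw [Λ.s_comp _ _ hw, hs'],
      Λ.d_comp _ _ hw⟩

lemma mem_loopDegrees {v : Λ.Path} {hv : Λ.IsVertex v} {n : Fin k → ℕ} :
    n ∈ Λ.loopDegrees v hv ↔ ∃ w, Λ.r w = v ∧ Λ.s w = v ∧ Λ.d w = n :=
  Iff.rfl

lemma exists_seg_vertex_eq {τ : Λ.Path} (hfin : {v : Λ.Path | Λ.IsVertex v}.Finite)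
    {e : Fin k → ℕ} {N : ℕ} (hτ : Λ.d τ = N • e) (hN : {v : Λ.Path | Λ.IsVertex v}.ncard ≤ N) :
    ∃ a b, a < b ∧ b ≤ N ∧ Λ.seg τ (a • e) (a • e) = Λ.seg τ (b • e) (b • e) := by
  have hmaps : ∀ j ∈ (Finset.range (N + 1) : Set ℕ),
      Λ.seg τ (j • e) (j • e) ∈ {v : Λ.Path | Λ.IsVertex v} := by
    intro j hj
    have hjN : j ≤ N := Nat.lt_succ_iff.mp (Finset.mem_range.mp hj)
    rw [Set.mem_ofPred_eq, IsVertex, Λ.d_seg τ le_rfl (hτ ▸ nsmul_le_nsmul_left zero_le hjN),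
      tsub_self]
  obtain ⟨a, ha, b, hb, hab, heq⟩ := Set.exists_ne_map_eq_of_ncard_lt_of_maps_to
    (by rwa [Set.ncard_coe_finset, Finset.card_range, Nat.lt_succ_iff]) hmaps hfin
  simp only [Finset.coe_range, Set.mem_Iio, Nat.lt_succ_iff] at ha hb
  rcases hab.lt_or_gt with hab | hab
  · exact ⟨a, b, hab, hb, heq⟩
  · exact ⟨b, a, hab, ha, heq.symm⟩

lemma nsmul_sub_nsmul {ι : Type*} {a b : ℕ} (e : ι → ℕ) : b • e - a • e = (b - a) • e := by
  funext i
  simp [Nat.sub_mul]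

lemma exists_loopDegree_of_d_eq_nsmul (hfin : {v : Λ.Path | Λ.IsVertex v}.Finite)
    (hnoent : Λ.NoCycleHasEntrance) {τ : Λ.Path} {e : Fin k → ℕ} (he : e ≠ 0) {N : ℕ}
    (hτ : Λ.d τ = N • e) (hN : {v : Λ.Path | Λ.IsVertex v}.ncard ≤ N) :
    ∃ n, 0 < n ∧ n • e ∈ Λ.loopDegrees (Λ.s τ) (Λ.d_s τ) := by
  obtain ⟨a, b, hab, hbN, hvert⟩ := Λ.exists_seg_vertex_eq hfin hτ hN
  have hae : a • e ≤ b • e := nsmul_le_nsmul_left zero_le hab.le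
  have hbe : b • e ≤ Λ.d τ := hτ ▸ nsmul_le_nsmul_left zero_le hbN
  set c := Λ.seg τ (a • e) (b • e)
  set t := Λ.seg τ (b • e) (Λ.d τ)
  have hc : Λ.IsCycle c := by
    refine ⟨?_, ?_⟩
    · rw [Λ.d_seg τ hae hbe, nsmul_sub_nsmul]
      exact smul_ne_zero (Nat.sub_ne_zero_of_lt hab) he
    · rw [Λ.r_seg τ hae hbe, Λ.s_seg τ hae hbe, hvert]
  have hrt : Λ.r t = Λ.r (Λ.pathPow c N) := by
    rw [Λ.r_pathPow hc.2, Λ.r_seg τ hbe le_rfl, Λ.r_seg τ hae hbe, hvert]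
  have hle : Λ.d t ≤ Λ.d (Λ.pathPow c N) := by
    rw [Λ.d_seg τ hbe le_rfl, Λ.d_pathPow hc.2, Λ.d_seg τ hae hbe, hτ, nsmul_sub_nsmul,
      nsmul_sub_nsmul, smul_smul]
    exact nsmul_le_nsmul_left zero_le (by nlinarith [Nat.sub_le N b, Nat.sub_pos_of_lt hab])
  obtain ⟨w, hrw, hsw, hdw⟩ :=
    Λ.exists_cycle_at_s_of_le hnoent (IsCycle.pathPow Λ hc (by omega)) hrt hle
  have hst : Λ.s t = Λ.s τ := by rw [Λ.s_seg τ hbe le_rfl, seg_top_top]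
  refine ⟨N * (b - a), Nat.mul_pos (by omega) (by omega), w, hrw.trans hst, hsw.trans hst, ?_⟩
  rw [hdw, Λ.d_pathPow hc.2, Λ.d_seg τ hae hbe, nsmul_sub_nsmul, smul_smul]

lemma exists_loopDegree_of_lePath (hfin : {v : Λ.Path | Λ.IsVertex v}.Finite)
    (hnoent : Λ.NoCycleHasEntrance) {lam : Λ.Path}
    (hlam : Λ.LePath (fun _ => {v : Λ.Path | Λ.IsVertex v}.ncard) lam) {i : Fin k}
    (hi : ∃ e, Λ.r e = Λ.s lam ∧ Λ.d e = Pi.single i 1) :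
    ∃ n ∈ Λ.loopDegrees (Λ.s lam) (Λ.d_s lam), n i ≠ 0 := by
  set N := {v : Λ.Path | Λ.IsVertex v}.ncard
  have hdi : Λ.d lam i = N := by
    obtain ⟨e, he⟩ := hi
    exact (hlam.1 i).eq_or_lt.resolve_right fun hlt => hlam.2 i hlt e he
  have hle : N • Pi.single i 1 ≤ Λ.d lam := by
    intro j
    rcases eq_or_ne j i with rfl | hj <;> simp [*]
  obtain ⟨-, hd₂, hs, hcomp⟩ := Λ.split_spec lam (m := Λ.d lam - N • Pi.single i 1) tsub_le_self
  set τ := (Λ.split lam (Λ.d lam - N • Pi.single i 1)).2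
  have hsτ : Λ.s τ = Λ.s lam := by rw [← Λ.s_comp _ _ hs, hcomp]
  obtain ⟨n, hn, hmem⟩ := Λ.exists_loopDegree_of_d_eq_nsmul hfin hnoent (by simp)
    (hd₂.trans (tsub_tsub_cancel_of_le hle)) le_rfl
  replace hmem := Λ.mem_loopDegrees.mp hmem
  rw [hsτ] at hmem
  exact ⟨_, hmem, by simpa using hn.ne'⟩

lemma exists_isInitialCycle {v : Λ.Path} (hv : Λ.IsVertex v)
    (hloop : ∀ i, (∃ e, Λ.r e = v ∧ Λ.d e = Pi.single i 1) →
      ∃ n ∈ Λ.loopDegrees v hv, n i ≠ 0) :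
    ∃ mu, Λ.IsInitialCycle mu ∧ Λ.r mu = v := by
  have hD : ∀ i, ∃ n ∈ Λ.loopDegrees v hv,
      (∃ e, Λ.r e = v ∧ Λ.d e = Pi.single i 1) → n i ≠ 0 := fun i => by
    by_cases h : ∃ e, Λ.r e = v ∧ Λ.d e = Pi.single i 1
    · obtain ⟨n, hn, hni⟩ := hloop i h
      exact ⟨n, hn, fun _ => hni⟩
    · exact ⟨0, zero_mem _, fun h' => absurd h' h⟩
  choose D hD hDi using hD
  obtain ⟨mu, hr, hs, hd⟩ := sum_mem (t := Finset.univ) fun i _ => hD i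
  refine ⟨mu, ⟨hr.trans hs.symm, ?_⟩, hr⟩
  rintro i hi e ⟨he, hed⟩
  refine hDi i ⟨e, he.trans hr, hed⟩ (Nat.eq_zero_of_le_zero ?_)
  calc D i i ≤ (∑ j, D j) i :=
        Finset.single_le_sum (f := D) (fun j _ => zero_le) (Finset.mem_univ i) i
    _ = 0 := by rw [← hd, hi]

end KGraph

theorem stmt16_general {k : ℕ} (Λ : KGraph k)
    (hfin : {v : Λ.Path | Λ.IsVertex v}.Finite) (hnoent : Λ.NoCycleHasEntrance)
    (lam : Λ.Path)
    (hlam : Λ.LePath (fun _ => {v : Λ.Path | Λ.IsVertex v}.ncard) lam) :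
    ∃ mu : Λ.Path, Λ.IsInitialCycle mu ∧
      ∃ x : (Fin k → ℕ) → (Fin k → ℕ) → Λ.Path, Λ.IsInfIterate mu x ∧
        ∃ n : Fin k → ℕ, (∀ i, (n i : ℕ∞) ≤ Λ.degInf mu i) ∧ x n n = Λ.s lam := by
  obtain ⟨mu, hmu, hr⟩ := Λ.exists_isInitialCycle (Λ.d_s lam)
    fun _ hi => Λ.exists_loopDegree_of_lePath hfin hnoent hlam hi
  have hx := Λ.isInfIterate_infIterate hmu.1
  exact ⟨mu, hmu, _, hx, 0, fun i => by simp, hx.2.1.trans hr⟩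

/-- from the proof of Proposition 5.9. If `Λ` is row-finite, locally
convex, with `N = |Λ⁰|` vertices, and no cycle of `Λ` has an entrance, then the source of
every `λ ∈ Λ^{≤(N,…,N)}` lies on an initial cycle. -/
theorem stmt16 {k : ℕ} (Λ : KGraph k) (hRF : Λ.RowFinite) (hLC : Λ.LocallyConvex)
    (hfin : {v : Λ.Path | Λ.IsVertex v}.Finite) (hnoent : Λ.NoCycleHasEntrance)
    (lam : Λ.Path)
    (hlam : Λ.LePath (fun _ => {v : Λ.Path | Λ.IsVertex v}.ncard) lam) :
    ∃ mu : Λ.Path, Λ.IsInitialCycle mu ∧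
      ∃ x : (Fin k → ℕ) → (Fin k → ℕ) → Λ.Path, Λ.IsInfIterate mu x ∧
        ∃ n : Fin k → ℕ, (∀ i, (n i : ℕ∞) ≤ Λ.degInf mu i) ∧ x n n = Λ.s lam :=
  stmt16_general Λ hfin hnoent lam hlam
end

section
/- Let Λ be a k-graph such that Λ⁰ is finite and nonempty and Λ contains no cycles, i.e. no λ ∈ Λ ∖ Λ⁰ with r(λ) = s(λ). Then: (i) Λ^n = ∅ whenever |n| := Σ_{i=1}^k n_i satisfies |n| ≥ |Λ⁰|; (ii) there exists v ∈ Λ⁰ with vΛ = {v}; (iii) if moreover Λ is row-finite, then Λ is a finite set. -/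
open scoped ComplexOrder ENat

/-!
For a vertex `v` let `s(vΛ)` be the set of vertices from which some path reaches `v`. If `Λ` has
no cycles and `d λ ≠ 0`, then `s(s(λ)Λ) ⊊ s(r(λ)Λ)`: the inclusion comes from composing with `λ`,
and `r(λ)` lies in the larger set but not the smaller, since a path from `r(λ)` to `s(λ)`
composed with `λ` would be a cycle. Peeling the edges off a path one at a time shows
`|d λ| < |s(r(λ)Λ)| ≤ |Λ⁰|`. A vertex minimising `|s(vΛ)|` receives no path of nonzero degree,
so it is a source. Finally, degrees are bounded, so a row-finite `Λ` is the finite union of the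
finite sets `vΛⁿ`.
-/

namespace KGraph

variable {k : ℕ} (Λ : KGraph k)

/-- The set `s(vΛ)`. -/
def reachable (v : Λ.Path) : Set Λ.Path := Λ.s '' {lam | Λ.r lam = v}

variable {Λ}

lemma mem_reachable_self {v : Λ.Path} (hv : Λ.IsVertex v) : v ∈ Λ.reachable v :=
  ⟨v, Λ.r_vertex v hv, Λ.s_vertex v hv⟩

lemma reachable_subset_vertices (v : Λ.Path) : Λ.reachable v ⊆ {w | Λ.IsVertex w} := by
  rintro _ ⟨lam, -, rfl⟩
  exact Λ.d_s lam

lemma reachable_s_subset (lam : Λ.Path) : Λ.reachable (Λ.s lam) ⊆ Λ.reachable (Λ.r lam) := by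
  rintro _ ⟨σ, hσ, rfl⟩
  exact ⟨Λ.comp lam σ, Λ.r_comp lam σ hσ.symm, Λ.s_comp lam σ hσ.symm⟩

lemma r_notMem_reachable_s (hnc : Λ.NoCycles) {lam : Λ.Path} (hd : Λ.d lam ≠ 0) :
    Λ.r lam ∉ Λ.reachable (Λ.s lam) := by
  rintro ⟨σ, hσ, hsσ⟩
  have hcycle : Λ.d (Λ.comp lam σ) = 0 :=
    hnc _ (by rw [Λ.r_comp lam σ hσ.symm, Λ.s_comp lam σ hσ.symm, hsσ])
  rw [Λ.d_comp lam σ hσ.symm] at hcycle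
  exact hd (add_eq_zero.mp hcycle).1

lemma ncard_reachable_s_lt (hnc : Λ.NoCycles) (hfin : {v : Λ.Path | Λ.IsVertex v}.Finite)
    {lam : Λ.Path} (hd : Λ.d lam ≠ 0) :
    (Λ.reachable (Λ.s lam)).ncard < (Λ.reachable (Λ.r lam)).ncard :=
  Set.ncard_lt_ncard ⟨reachable_s_subset lam, fun h ↦
      r_notMem_reachable_s hnc hd (h (mem_reachable_self (Λ.d_r lam)))⟩
    (hfin.subset (reachable_subset_vertices _))

lemma exists_comp_eq_of_degree_ne_zero {lam : Λ.Path} {i : Fin k} (hi : Λ.d lam i ≠ 0) :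
    ∃ mu nu, Λ.d mu = Pi.single i 1 ∧ ∑ j, Λ.d nu j + 1 = ∑ j, Λ.d lam j ∧
      Λ.s mu = Λ.r nu ∧ Λ.comp mu nu = lam := by
  have hsplit : Λ.d lam = Pi.single i 1 + (Λ.d lam - Pi.single i 1) := by
    refine (add_tsub_cancel_of_le fun j ↦ ?_).symm
    rcases eq_or_ne j i with rfl | hj
    · simpa [Nat.one_le_iff_ne_zero] using hi
    · simp [hj]
  obtain ⟨⟨mu, nu⟩, ⟨hmu, -, hs, hcomp⟩, -⟩ := Λ.factor lam _ _ hsplit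
  refine ⟨mu, nu, hmu, ?_, hs, hcomp⟩
  rw [← hcomp, Λ.d_comp mu nu hs, hmu]
  simp only [Pi.add_apply, Finset.sum_add_distrib, Finset.sum_pi_single', Finset.mem_univ,
    if_true]
  omega

theorem sum_degree_lt_ncard_reachable (hnc : Λ.NoCycles)
    (hfin : {v : Λ.Path | Λ.IsVertex v}.Finite) (lam : Λ.Path) :
    ∑ i, Λ.d lam i < (Λ.reachable (Λ.r lam)).ncard := by
  induction hN : ∑ i, Λ.d lam i generalizing lam with
  | zero =>
    exact (Set.ncard_pos (hfin.subset (reachable_subset_vertices _))).mpr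
      ⟨_, mem_reachable_self (Λ.d_r lam)⟩
  | succ N ih =>
    obtain ⟨i, hi⟩ : ∃ i, Λ.d lam i ≠ 0 := by
      by_contra! h0
      simp [h0] at hN
    obtain ⟨mu, nu, hmu, hsum, hs, rfl⟩ := exists_comp_eq_of_degree_ne_zero hi
    have hdmu : Λ.d mu ≠ 0 := by simp [hmu]
    calc N + 1 ≤ (Λ.reachable (Λ.r nu)).ncard := ih nu (by omega)
      _ = (Λ.reachable (Λ.s mu)).ncard := by rw [hs]
      _ < (Λ.reachable (Λ.r mu)).ncard := ncard_reachable_s_lt hnc hfin hdmu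
      _ = (Λ.reachable (Λ.r (Λ.comp mu nu))).ncard := by rw [Λ.r_comp mu nu hs]

theorem sum_degree_lt_ncard_vertices (hnc : Λ.NoCycles)
    (hfin : {v : Λ.Path | Λ.IsVertex v}.Finite) (lam : Λ.Path) :
    ∑ i, Λ.d lam i < {v : Λ.Path | Λ.IsVertex v}.ncard :=
  (sum_degree_lt_ncard_reachable hnc hfin lam).trans_le
    (Set.ncard_le_ncard (reachable_subset_vertices _) hfin)

theorem exists_isSource (hnc : Λ.NoCycles) (hfin : {v : Λ.Path | Λ.IsVertex v}.Finite)
    (hne : {v : Λ.Path | Λ.IsVertex v}.Nonempty) : ∃ v, Λ.IsSource v := by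
  obtain ⟨v, hv, hmin⟩ := Set.exists_min_image _ (fun v ↦ (Λ.reachable v).ncard) hfin hne
  refine ⟨v, hv, fun lam hr ↦ ?_⟩
  by_contra hlam
  have hd : Λ.d lam ≠ 0 := fun h0 ↦ hlam (hr ▸ (Λ.r_vertex lam h0).symm)
  have hle := hmin (Λ.s lam) (Λ.d_s lam)
  rw [← hr] at hle
  exact (ncard_reachable_s_lt hnc hfin hd).not_ge hle

theorem finite_of_rowFinite (hrow : Λ.RowFinite) (hfin : {v : Λ.Path | Λ.IsVertex v}.Finite)
    (c : Fin k → ℕ) (hc : ∀ lam, Λ.d lam ≤ c) : Finite Λ.Path := by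
  rw [← Set.finite_univ_iff]
  refine (hfin.biUnion fun v hv ↦ (Set.finite_Iic c).biUnion fun n _ ↦ hrow v n hv).subset ?_
  intro lam _
  simp only [Set.mem_iUnion]
  exact ⟨_, Λ.d_r lam, _, hc lam, rfl, rfl⟩

end KGraph

/-- Structural facts about `k`-graphs with finitely many vertices and no
cycles: (i) there are no paths of length `≥ |Λ⁰|`; (ii) there is a vertex `v` with
`vΛ = {v}`; (iii) if `Λ` is moreover row-finite then `Λ` is finite. -/
theorem stmt17 {k : ℕ} (Λ : KGraph k)
    (hfin : {v : Λ.Path | Λ.IsVertex v}.Finite)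
    (hne : {v : Λ.Path | Λ.IsVertex v}.Nonempty)
    (hnc : Λ.NoCycles) :
    (∀ n : Fin k → ℕ, {v : Λ.Path | Λ.IsVertex v}.ncard ≤ ∑ i, n i →
      ∀ lam : Λ.Path, Λ.d lam ≠ n) ∧
    (∃ v, Λ.IsSource v) ∧
    (Λ.RowFinite → Finite Λ.Path) := by
  have hbound := KGraph.sum_degree_lt_ncard_vertices hnc hfin
  refine ⟨fun n hn lam hd ↦ (hbound lam).not_ge (hd ▸ hn), KGraph.exists_isSource hnc hfin hne,
    fun hrow ↦ ?_⟩
  refine KGraph.finite_of_rowFinite hrow hfin (fun _ ↦ {v | Λ.IsVertex v}.ncard) fun lam i ↦ ?_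
  exact (Finset.single_le_sum (fun j _ ↦ Nat.zero_le (Λ.d lam j)) (Finset.mem_univ i)).trans
    (hbound lam).le
end
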